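/- arXiv:2407.06607 — 2 statements merged into one kernel-verified Lean document; each statement's English description precedes it below -/
import Mathlib

section
/- Let 0 < θ₂ < θ₁ < π/2, r₂ > 0, λ > 0, h_min > 0, Δh_max > 0, Δφ > 0, 0 < z_min ≤ z_max, and set b⊥ = r₂·sin(θ₁ − θ₂) > 0. Assume b_min ≤ b⊥. For a master UAV with altitude z₁ > 0 placed at x₁ = x_t − z₁·tan θ₁ (so that r₁ = z₁/cos θ₁), the conjunction of the constraints z_min ≤ z₁ ≤ z_max (C1), r₂ ≤ r₁ (C3), b ≥ b_min (C5), h_amb ≥ h_min (C8), and Δh_worst ≤ Δh_max (C9) holds if and only if max{ z_min, r₂·cos θ₁, cos θ₁·b⊥·h_min/(λ·sin θ₁) } ≤ z₁ ≤ min{ z_max, 2π·cos θ₁·b⊥·Δh_max/(λ·sin θ₁·Δφ) }. -/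
/-!
Under C2 the slant range `r₁ = z₁ / cos θ₁` and the height of ambiguity
`h_amb = z₁ · λ sin θ₁ / (cos θ₁ · b⊥)` are positive multiples of the altitude `z₁`, so each of
C3, C8 and C9 is a one-sided bound on `z₁`, while C5 holds automatically because the baseline
dominates its perpendicular component `b⊥ ≥ b_min`. Intersecting these bounds with C1 gives the
interval.
-/

open Real

lemma le_sqrt_sq_add_sq_of_le {a x y : ℝ} (h : a ≤ y) : a ≤ √(x ^ 2 + y ^ 2) :=
  h.trans <| (le_abs_self y).trans <| abs_le_sqrt <| le_add_of_nonneg_left (sq_nonneg x)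

section HeightOfAmbiguity

variable {lam c s bperp z : ℝ}

lemma heightOfAmbiguity_eq_mul :
    lam * (z / c) * s / bperp = z * (lam * s / (c * bperp)) := by
  ring

lemma le_heightOfAmbiguity_iff (hlam : 0 < lam) (hc : 0 < c) (hs : 0 < s) (hbperp : 0 < bperp)
    (h : ℝ) : h ≤ lam * (z / c) * s / bperp ↔ c * bperp * h / (lam * s) ≤ z := by
  rw [heightOfAmbiguity_eq_mul, ← div_le_iff₀ (by positivity), div_div_eq_mul_div, mul_comm h]

lemma heightOfAmbiguity_mul_div_le_iff (hlam : 0 < lam) (hc : 0 < c) (hs : 0 < s)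
    (hbperp : 0 < bperp) {φ k Δh : ℝ} (hφ : 0 < φ) (hk : 0 < k) :
    lam * (z / c) * s / bperp * φ / k ≤ Δh ↔ z ≤ k * c * bperp * Δh / (lam * s * φ) := by
  rw [div_le_iff₀ hk, heightOfAmbiguity_eq_mul, le_div_iff₀ (by positivity), ← le_div_iff₀ hφ,
    ← le_div_iff₀ (by positivity)]
  field_simp

end HeightOfAmbiguity

theorem master_altitude_interval_characterization_general
    (θ₁ θ₂ r₂ lam h_min Δh_max Δφ z_min z_max b_min z₁ : ℝ)
    (hθ₂ : 0 < θ₂) (hθ : θ₂ < θ₁) (hθ₁ : θ₁ < π / 2)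
    (hr₂ : 0 < r₂) (hlam : 0 < lam)
    (hΔφ : 0 < Δφ)
    (bperp : ℝ) (hbperp : bperp = r₂ * Real.sin (θ₁ - θ₂))
    (hbmin : b_min ≤ bperp)
    (r₁ : ℝ) (hr₁ : r₁ = z₁ / Real.cos θ₁)
    (b : ℝ) (hb : b = Real.sqrt ((r₁ - r₂ * Real.cos (θ₁ - θ₂)) ^ 2 + bperp ^ 2))
    (h_amb : ℝ) (hamb : h_amb = lam * r₁ * Real.sin θ₁ / bperp)
    (Δh_worst : ℝ) (hworst : Δh_worst = h_amb * Δφ / (2 * π)) :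
    (z_min ≤ z₁ ∧ z₁ ≤ z_max ∧ r₂ ≤ r₁ ∧ b_min ≤ b ∧
       h_min ≤ h_amb ∧ Δh_worst ≤ Δh_max) ↔
    (max (max z_min (r₂ * Real.cos θ₁))
        (Real.cos θ₁ * bperp * h_min / (lam * Real.sin θ₁)) ≤ z₁ ∧
     z₁ ≤ min z_max
        (2 * π * Real.cos θ₁ * bperp * Δh_max / (lam * Real.sin θ₁ * Δφ))) := by
  have hc : 0 < cos θ₁ := cos_pos_of_mem_Ioo ⟨by linarith, hθ₁⟩
  have hs : 0 < sin θ₁ := sin_pos_of_pos_of_lt_pi (by linarith) (by linarith)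
  have hbperp_pos : 0 < bperp :=
    hbperp ▸ mul_pos hr₂ (sin_pos_of_pos_of_lt_pi (by linarith) (by linarith))
  have C3 : r₂ ≤ r₁ ↔ r₂ * cos θ₁ ≤ z₁ := by rw [hr₁, le_div_iff₀ hc]
  have C5 : b_min ≤ b := hb ▸ le_sqrt_sq_add_sq_of_le hbmin
  have C8 : h_min ≤ h_amb ↔ cos θ₁ * bperp * h_min / (lam * sin θ₁) ≤ z₁ := by
    rw [hamb, hr₁]; exact le_heightOfAmbiguity_iff hlam hc hs hbperp_pos h_min
  have C9 : Δh_worst ≤ Δh_max ↔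
      z₁ ≤ 2 * π * cos θ₁ * bperp * Δh_max / (lam * sin θ₁ * Δφ) := by
    rw [hworst, hamb, hr₁]
    exact heightOfAmbiguity_mul_div_le_iff hlam hc hs hbperp_pos hΔφ (by positivity)
  simp only [max_le_iff, le_min_iff, C3, C8, C9]
  tauto

/-- For the master UAV placed under constraint C2 (so r₁ = z₁/cos θ₁),
and when b_min ≤ b⊥, the conjunction of constraints C1, C3, C5, C8, C9 is
equivalent to an interval condition on the master altitude z₁. -/
theorem master_altitude_interval_characterization
    (θ₁ θ₂ r₂ lam h_min Δh_max Δφ z_min z_max b_min z₁ : ℝ)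
    (hθ₂ : 0 < θ₂) (hθ : θ₂ < θ₁) (hθ₁ : θ₁ < π / 2)
    (hr₂ : 0 < r₂) (hlam : 0 < lam) (hhmin : 0 < h_min)
    (hΔh : 0 < Δh_max) (hΔφ : 0 < Δφ)
    (hzmin : 0 < z_min) (hzminmax : z_min ≤ z_max)
    (hz₁ : 0 < z₁)
    (bperp : ℝ) (hbperp : bperp = r₂ * Real.sin (θ₁ - θ₂))
    (hbmin : b_min ≤ bperp)
    (r₁ : ℝ) (hr₁ : r₁ = z₁ / Real.cos θ₁)
    (b : ℝ) (hb : b = Real.sqrt ((r₁ - r₂ * Real.cos (θ₁ - θ₂)) ^ 2 + bperp ^ 2))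
    (h_amb : ℝ) (hamb : h_amb = lam * r₁ * Real.sin θ₁ / bperp)
    (Δh_worst : ℝ) (hworst : Δh_worst = h_amb * Δφ / (2 * π)) :
    (z_min ≤ z₁ ∧ z₁ ≤ z_max ∧ r₂ ≤ r₁ ∧ b_min ≤ b ∧
       h_min ≤ h_amb ∧ Δh_worst ≤ Δh_max) ↔
    (max (max z_min (r₂ * Real.cos θ₁))
        (Real.cos θ₁ * bperp * h_min / (lam * Real.sin θ₁)) ≤ z₁ ∧
     z₁ ≤ min z_max
        (2 * π * Real.cos θ₁ * bperp * Δh_max / (lam * Real.sin θ₁ * Δφ))) :=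
  master_altitude_interval_characterization_general θ₁ θ₂ r₂ lam h_min Δh_max Δφ z_min z_max b_min
    z₁ hθ₂ hθ hθ₁ hr₂ hlam hΔφ bperp hbperp hbmin r₁ hr₁ b hb h_amb hamb Δh_worst hworst
end

section
/- Let Θ > 0 and θ₁ satisfy −π/2 < θ₁ − Θ/2 < θ₁ + Θ/2 < π/2, let δ_t ≥ 0, z_max > 0, v_max ≥ 0, and suppose the master UAV is placed at q₁ = (x_t − z₁·tan θ₁, z₁) with 0 < z₁ ≤ z_max and the velocities satisfy 0 ≤ v[n] ≤ v_max for all n. Then the InSAR coverage is bounded as C_N ≤ z_max·(tan(θ₁ + Θ/2) − tan(θ₁ − Θ/2))·(N − 1)·v_max·δ_t, i.e. C_N ≤ (S_far(q_max) − S_near(q_max))·(N−1)·v_max·δ_t with q_max = (x_t − z_max·tan θ₁, z_max). -/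
open Real Finset

/-! The usable swath never exceeds the master's own footprint, whose width is
`z₁ (tan(θ₁ + Θ/2) − tan(θ₁ − Θ/2))`; this width is nonnegative because `tan` is increasing on
`(−π/2, π/2)`, and it grows with the altitude, so it is at most the width at `z_max`.
Bounding each of the `N − 1` velocities by `v_max` then bounds the sum. -/

lemma max_zero_min_sub_max_le {α : Type*} [AddCommGroup α] [LinearOrder α]
    [IsOrderedAddMonoid α] (a b c d : α) :
    max 0 (min a b - max c d) ≤ max 0 (a - c) :=
  max_le_max le_rfl (sub_le_sub (min_le_left a b) (le_max_left c d))

lemma footprint_width (x z θ Θ : ℝ) :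
    (x + z * tan (θ + Θ / 2)) - (x + z * tan (θ - Θ / 2)) =
      z * (tan (θ + Θ / 2) - tan (θ - Θ / 2)) := by
  ring

lemma sum_mul_mul_le_of_le {ι : Type*} (s : Finset ι) (f v : ι → ℝ) {K V δ : ℝ}
    (hf : ∀ i ∈ s, f i ≤ K) (hK : 0 ≤ K) (hv : ∀ i ∈ s, 0 ≤ v i ∧ v i ≤ V) (hδ : 0 ≤ δ) :
    ∑ i ∈ s, f i * v i * δ ≤ K * #s * V * δ := by
  calc ∑ i ∈ s, f i * v i * δ ≤ ∑ _i ∈ s, K * V * δ := by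
        refine sum_le_sum fun i hi => mul_le_mul_of_nonneg_right ?_ hδ
        exact mul_le_mul (hf i hi) (hv i hi).2 (hv i hi).1 hK
    _ = K * #s * V * δ := by
        rw [sum_const, nsmul_eq_mul]
        ring

theorem coverage_global_upper_bound_general
    (Θ θ₁ x_t δt z_max v_max z₁ Sfar₂ Snear₂ : ℝ) (N : ℕ) (v : ℕ → ℝ)
    (hΘ : 0 < Θ) (h₁ : -(π / 2) < θ₁ - Θ / 2) (h₂ : θ₁ + Θ / 2 < π / 2)
    (hδt : 0 ≤ δt) (hzmax : 0 < z_max)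
    (hz₁max : z₁ ≤ z_max)
    (hv : ∀ n, 0 ≤ v n ∧ v n ≤ v_max) :
    ∑ n ∈ Finset.range (N - 1),
        max 0
          (min ((x_t - z₁ * Real.tan θ₁) + z₁ * Real.tan (θ₁ + Θ / 2)) Sfar₂ -
            max ((x_t - z₁ * Real.tan θ₁) + z₁ * Real.tan (θ₁ - Θ / 2)) Snear₂)
          * v n * δt ≤
      z_max * (Real.tan (θ₁ + Θ / 2) - Real.tan (θ₁ - Θ / 2)) *
        ((N - 1 : ℕ) : ℝ) * v_max * δt := by
  have hwidth : 0 ≤ tan (θ₁ + Θ / 2) - tan (θ₁ - Θ / 2) :=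
    sub_nonneg.2 (tan_lt_tan_of_lt_of_lt_pi_div_two h₁ h₂ (by linarith)).le
  have hK : 0 ≤ z_max * (tan (θ₁ + Θ / 2) - tan (θ₁ - Θ / 2)) := mul_nonneg hzmax.le hwidth
  have hswath : ∀ n ∈ range (N - 1),
      max 0 (min ((x_t - z₁ * tan θ₁) + z₁ * tan (θ₁ + Θ / 2)) Sfar₂ -
          max ((x_t - z₁ * tan θ₁) + z₁ * tan (θ₁ - Θ / 2)) Snear₂) ≤
        z_max * (tan (θ₁ + Θ / 2) - tan (θ₁ - Θ / 2)) := by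
    intro _ _
    refine (max_zero_min_sub_max_le _ _ _ _).trans (max_le hK ?_)
    rw [footprint_width]
    exact mul_le_mul_of_nonneg_right hz₁max hwidth
  simpa using sum_mul_mul_le_of_le _ _ v hswath hK (fun n _ => hv n) hδt

/-- With the master UAV placed under constraint C2 at altitude
z₁ ≤ z_max and velocities bounded by v_max, the InSAR coverage is bounded by
(S_far(q_max) − S_near(q_max))·(N−1)·v_max·δ_t
  = z_max·(tan(θ₁+Θ/2) − tan(θ₁−Θ/2))·(N−1)·v_max·δ_t. -/
theorem coverage_global_upper_bound
    (Θ θ₁ x_t δt z_max v_max z₁ Sfar₂ Snear₂ : ℝ) (N : ℕ) (v : ℕ → ℝ)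
    (hΘ : 0 < Θ) (h₁ : -(π / 2) < θ₁ - Θ / 2) (h₂ : θ₁ + Θ / 2 < π / 2)
    (hδt : 0 ≤ δt) (hzmax : 0 < z_max) (hvmax : 0 ≤ v_max)
    (hz₁ : 0 < z₁) (hz₁max : z₁ ≤ z_max)
    (hv : ∀ n, 0 ≤ v n ∧ v n ≤ v_max) :
    ∑ n ∈ Finset.range (N - 1),
        max 0
          (min ((x_t - z₁ * Real.tan θ₁) + z₁ * Real.tan (θ₁ + Θ / 2)) Sfar₂ -
            max ((x_t - z₁ * Real.tan θ₁) + z₁ * Real.tan (θ₁ - Θ / 2)) Snear₂)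
          * v n * δt ≤
      z_max * (Real.tan (θ₁ + Θ / 2) - Real.tan (θ₁ - Θ / 2)) *
        ((N - 1 : ℕ) : ℝ) * v_max * δt :=
  coverage_global_upper_bound_general Θ θ₁ x_t δt z_max v_max z₁ Sfar₂ Snear₂ N v hΘ h₁ h₂ hδt hzmax
    hz₁max hv
end
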